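/- Fix a partition λ with at most n rows and an index 1 ≤ i < n. For every semistandard set-valued tableau T ∈ SVT^n(λ), the result f_i(T) of the set-valued crystal operator is either 0 or again an element of SVT^n(λ), and likewise e_i(T) is either 0 or an element of SVT^n(λ); that is, the signature-rule operations always produce valid semistandard set-valued tableaux. -/
import Mathlib


open scoped Classical

noncomputable section

namespace SVTCrystal

/-- A filling assigns to each (row, column) position (0-indexed) a finite set of entries. -/
abbrev Filling : Type := ℕ → ℕ → Finset ℕ

/-- `lam` is a partition shape with at most `n` rows. -/
def IsPartitionShape (n : ℕ) (lam : ℕ → ℕ) : Prop :=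
  (∀ r, lam (r + 1) ≤ lam r) ∧ (∀ r, n ≤ r → lam r = 0)

/-- Semistandard set-valued tableau of shape `lam` with entries in `{1,…,n}`. -/
structure IsSVT (n : ℕ) (lam : ℕ → ℕ) (t : Filling) : Prop where
  boxNonempty : ∀ r c, c < lam r → (t r c).Nonempty
  emptyOutside : ∀ r c, ¬ c < lam r → t r c = ∅
  entryBounds : ∀ r c a, a ∈ t r c → 1 ≤ a ∧ a ≤ n
  rowWeak : ∀ r c a b, a ∈ t r c → b ∈ t r (c + 1) → a ≤ b
  colStrict : ∀ r c a b, a ∈ t r c → b ∈ t (r + 1) c → a < b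

/-- Semistandard Young tableau: a set-valued tableau all of whose boxes are singletons. -/
def IsSSYT (n : ℕ) (lam : ℕ → ℕ) (t : Filling) : Prop :=
  IsSVT n lam t ∧ ∀ r c, c < lam r → (t r c).card = 1

/-- The weight: `wt n lam t j` is the number of boxes of `t` containing the entry `j`. -/
def wt (n : ℕ) (lam : ℕ → ℕ) (t : Filling) (j : ℕ) : ℕ :=
  ((Finset.range n ×ˢ Finset.range (lam 0)).filter (fun p => j ∈ t p.1 p.2)).card

/-- The excess: total number of extra entries. -/
def excess (n : ℕ) (lam : ℕ → ℕ) (t : Filling) : ℕ :=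
  ∑ p ∈ Finset.range n ×ˢ Finset.range (lam 0), ((t p.1 p.2).card - 1)

/-- Column `c` contains the entry `a`. -/
def colHas (n : ℕ) (t : Filling) (a c : ℕ) : Prop := ∃ r, r < n ∧ a ∈ t r c

/-- The sign of column `c` for the `i`-signature rule: `+` (true) if the column contains `i`
but not `i+1`, `-` (false) if it contains `i+1` but not `i`. -/
def colSign (n : ℕ) (t : Filling) (i c : ℕ) : Option Bool :=
  if colHas n t i c ∧ ¬ colHas n t (i + 1) c then some true
  else if colHas n t (i + 1) c ∧ ¬ colHas n t i c then some false
  else none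

/-- The number of `-` (false) signs left uncanceled after scanning the word left-to-right,
iteratively canceling `-+` pairs. -/
def mctr (w : List Bool) : ℕ := w.foldl (fun cnt b => if b then cnt - 1 else cnt + 1) 0

/-- The number of `+` (true) signs left uncanceled, scanning right-to-left. -/
def pctr (w : List Bool) : ℕ := w.foldr (fun b cnt => if b then cnt + 1 else cnt - 1) 0

/-- The word of column signs of the columns before column `c`. -/
def colWordBefore (n : ℕ) (t : Filling) (i c : ℕ) : List Bool :=
  (List.range c).filterMap (colSign n t i)

/-- The word of column signs of the columns after column `c` (among columns `< ncols`). -/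
def colWordAfter (n ncols : ℕ) (t : Filling) (i c : ℕ) : List Bool :=
  ((List.range ncols).drop (c + 1)).filterMap (colSign n t i)

/-- Column `c` carries an uncanceled `+` for the `i`-signature rule. -/
def PlusCol (n ncols : ℕ) (t : Filling) (i c : ℕ) : Prop :=
  c < ncols ∧ colSign n t i c = some true ∧ mctr (colWordBefore n t i c) = 0

/-- Column `c` carries an uncanceled `-` for the `i`-signature rule. -/
def MinusCol (n ncols : ℕ) (t : Filling) (i c : ℕ) : Prop :=
  c < ncols ∧ colSign n t i c = some false ∧ pctr (colWordAfter n ncols t i c) = 0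

/-- Column `c` is the rightmost uncanceled `+`. -/
def fBoxCol (n ncols : ℕ) (t : Filling) (i c : ℕ) : Prop :=
  PlusCol n ncols t i c ∧ ∀ c', PlusCol n ncols t i c' → c' ≤ c

/-- Column `c` is the leftmost uncanceled `-`. -/
def eBoxCol (n ncols : ℕ) (t : Filling) (i c : ℕ) : Prop :=
  MinusCol n ncols t i c ∧ ∀ c', MinusCol n ncols t i c' → c ≤ c'

/-- Replace the content of the box in row `r`, column `c` by `A`. -/
def updateBox (t : Filling) (r c : ℕ) (A : Finset ℕ) : Filling :=
  fun r' c' => if r' = r ∧ c' = c then A else t r' c'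

/-- The set-valued crystal operator `f_i` (signature rule). -/
def fRaw (n : ℕ) (lam : ℕ → ℕ) (i : ℕ) (t : Filling) : Option Filling :=
  if h : ∃ c, fBoxCol n (lam 0) t i c then
    let c := Classical.choose h
    if hr : ∃ r, r < n ∧ i ∈ t r c then
      let r := Classical.choose hr
      if i ∈ t r (c + 1) then
        some (updateBox (updateBox t r (c + 1) ((t r (c + 1)).erase i)) r c
          (insert (i + 1) (t r c)))
      else some (updateBox t r c (insert (i + 1) ((t r c).erase i)))
    else none
  else none

/-- The set-valued crystal operator `e_i` (signature rule). -/
def eRaw (n : ℕ) (lam : ℕ → ℕ) (i : ℕ) (t : Filling) : Option Filling :=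
  if h : ∃ c, eBoxCol n (lam 0) t i c then
    let c := Classical.choose h
    if hr : ∃ r, r < n ∧ (i + 1) ∈ t r c then
      let r := Classical.choose hr
      if 0 < c ∧ (i + 1) ∈ t r (c - 1) then
        some (updateBox (updateBox t r (c - 1) ((t r (c - 1)).erase (i + 1))) r c
          (insert i (t r c)))
      else some (updateBox t r c (insert i ((t r c).erase (i + 1))))
    else none
  else none

/-- Iterate a partially-defined operator. -/
def iterOpt (g : Filling → Option Filling) : ℕ → Filling → Option Filling
  | 0, t => some t
  | m + 1, t => (iterOpt g m t).bind g

/-- Highest weight (Yamanouchi) elements. -/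
def IsYamanouchi (n : ℕ) (lam : ℕ → ℕ) (t : Filling) : Prop :=
  ∀ i, 1 ≤ i → i < n → eRaw n lam i t = none

/-- Closure of `t0` under the crystal operators `e_i`, `f_i` for `1 ≤ i < n`. -/
inductive Reach (n : ℕ) (lam : ℕ → ℕ) (t0 : Filling) : Filling → Prop
  | base : Reach n lam t0 t0
  | stepF : ∀ {t t' : Filling} (i : ℕ), 1 ≤ i → i < n → Reach n lam t0 t →
      fRaw n lam i t = some t' → Reach n lam t0 t'
  | stepE : ∀ {t t' : Filling} (i : ℕ), 1 ≤ i → i < n → Reach n lam t0 t →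
      eRaw n lam i t = some t' → Reach n lam t0 t'

/-- The one-row partition `(s)`. -/
def rowShape (s : ℕ) : ℕ → ℕ := fun r => if r = 0 then s else 0

/-- The one-column partition `(1^k)`. -/
def colShape (k : ℕ) : ℕ → ℕ := fun r => if r < k then 1 else 0

/-- The hook partition `(s, 1^e)`. -/
def hookShape (s e : ℕ) : ℕ → ℕ := fun r => if r = 0 then s else if r ≤ e then 1 else 0

/-! ### K-theory crystal operators (for single rows and single columns) -/

/-- Some box of the tableau contains the entry `a`. -/
def containsEntry (n : ℕ) (lam : ℕ → ℕ) (t : Filling) (a : ℕ) : Prop :=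
  ∃ r c, r < n ∧ c < lam r ∧ a ∈ t r c

/-- `p` is the rightmost box of `t` containing `i`. -/
def KBoxF (n : ℕ) (lam : ℕ → ℕ) (t : Filling) (i : ℕ) (p : ℕ × ℕ) : Prop :=
  p.1 < n ∧ p.2 < lam p.1 ∧ i ∈ t p.1 p.2 ∧
    ∀ q : ℕ × ℕ, q.1 < n → q.2 < lam q.1 → i ∈ t q.1 q.2 → q.2 ≤ p.2

/-- The K-crystal operator `f_i^K`: if `i` occurs in `t` and `i+1` does not, add `i+1` to
the rightmost box containing `i`; otherwise `0`. -/
def fK (n : ℕ) (lam : ℕ → ℕ) (i : ℕ) (t : Filling) : Option Filling :=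
  if h : (∃ p : ℕ × ℕ, KBoxF n lam t i p) ∧ ¬ containsEntry n lam t (i + 1) then
    let p := Classical.choose h.1
    some (updateBox t p.1 p.2 (insert (i + 1) (t p.1 p.2)))
  else none

/-- The K-crystal operator `e_i^K`: delete `i+1` from the box containing both `i` and `i+1`,
if such a box exists; otherwise `0`. -/
def eK (n : ℕ) (lam : ℕ → ℕ) (i : ℕ) (t : Filling) : Option Filling :=
  if h : ∃ p : ℕ × ℕ, p.1 < n ∧ p.2 < lam p.1 ∧ i ∈ t p.1 p.2 ∧ (i + 1) ∈ t p.1 p.2 then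
    let p := Classical.choose h
    some (updateBox t p.1 p.2 ((t p.1 p.2).erase (i + 1)))
  else none

/-- `t'` is the result of applying `g` to `t` as many times as possible. -/
def MaxApply (g : Filling → Option Filling) (t t' : Filling) : Prop :=
  (∃ m, iterOpt g m t = some t') ∧ g t' = none

/-- One Demazure step: apply `e_i` as many times as possible, then `e_i^K` as many times
as possible (here `eKop i` is the `i`-th K-operator). -/
def DemStep (n : ℕ) (lam : ℕ → ℕ) (eKop : ℕ → Filling → Option Filling) (i : ℕ)
    (t t' : Filling) : Prop :=
  ∃ t1, MaxApply (eRaw n lam i) t t1 ∧ MaxApply (eKop i) t1 t'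

/-- `DemReach n lam eKop [i₁,…,iℓ] t u` holds when
`u = (e_{iℓ}^K)^max e_{iℓ}^max ⋯ (e_{i₁}^K)^max e_{i₁}^max t`. -/
def DemReach (n : ℕ) (lam : ℕ → ℕ) (eKop : ℕ → Filling → Option Filling) :
    List ℕ → Filling → Filling → Prop
  | [], t, u => t = u
  | i :: rest, t, u => ∃ t2, DemStep n lam eKop i t t2 ∧ DemReach n lam eKop rest t2 u

/-- The minimal highest weight tableau `u_λ`, whose row `r` boxes are all `{r+1}`. -/
def uTab (lam : ℕ → ℕ) : Filling := fun r c => if c < lam r then {r + 1} else ∅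

/-- The K-Demazure crystal associated with a word `[i₁,…,iℓ]`. -/
def KDem (n : ℕ) (lam : ℕ → ℕ) (eKop : ℕ → Filling → Option Filling) (word : List ℕ) :
    Set Filling :=
  {t | IsSVT n lam t ∧ DemReach n lam eKop word t (uTab lam)}

/-! ### Permutations and reduced words -/

/-- The permutation `s_{i₁} ⋯ s_{iℓ}` of a word `[i₁,…,iℓ]`, where `s_i` swaps `i`, `i+1`. -/
def wordPerm (word : List ℕ) : Equiv.Perm ℕ :=
  (word.map fun i => Equiv.swap i (i + 1)).prod

/-- `word` is a reduced word for `w` in the Coxeter generators `s_1, …, s_{n-1}`. -/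
def IsReducedWord (n : ℕ) (w : Equiv.Perm ℕ) (word : List ℕ) : Prop :=
  (∀ i ∈ word, 1 ≤ i ∧ i < n) ∧ wordPerm word = w ∧
    ∀ word' : List ℕ, (∀ i ∈ word', 1 ≤ i ∧ i < n) → wordPerm word' = w →
      word.length ≤ word'.length

/-- The Coxeter length of a permutation of `{1,…,n}`. -/
def permLength (n : ℕ) (σ : Equiv.Perm ℕ) : ℕ :=
  sInf {l | ∃ word : List ℕ, (∀ i ∈ word, 1 ≤ i ∧ i < n) ∧ wordPerm word = σ ∧
    word.length = l}

/-- The parabolic subgroup generated by `s_2, …, s_{n-1}`. -/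
def parabolic (n : ℕ) : Subgroup (Equiv.Perm ℕ) :=
  Subgroup.closure {σ | ∃ i, 2 ≤ i ∧ i < n ∧ σ = Equiv.swap i (i + 1)}

/-! ### Polynomials -/

/-- Polynomials in `x₁, x₂, …` over `ℤ[β]`; the variable `β` is `Polynomial.X`. -/
abbrev KPoly : Type := MvPolynomial ℕ (Polynomial ℤ)

/-- The scalar `β`. -/
def betaP : KPoly := MvPolynomial.C Polynomial.X

/-- The monomial `x^{wt(T)} = x₁^{wt₁} ⋯ xₙ^{wtₙ}`. -/
def xwt (n : ℕ) (lam : ℕ → ℕ) (t : Filling) : KPoly :=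
  ∏ j ∈ Finset.Icc 1 n, (MvPolynomial.X j : KPoly) ^ wt n lam t j

/-- The β-character `∑_{T ∈ S} β^{excess T} x^{wt T}` of a set of tableaux. -/
def charSet (n : ℕ) (lam : ℕ → ℕ) (S : Set Filling) : KPoly :=
  ∑ᶠ t ∈ S, betaP ^ excess n lam t * xwt n lam t

/-- The symmetric Grothendieck polynomial `𝔊_λ(x₁,…,xₙ; β)`. -/
def Groth (n : ℕ) (lam : ℕ → ℕ) : KPoly :=
  charSet n lam {t | IsSVT n lam t}

/-- The Schur polynomial `s_μ(x₁,…,xₙ)`. -/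
def SchurP (n : ℕ) (mu : ℕ → ℕ) : KPoly :=
  ∑ᶠ t ∈ {t : Filling | IsSSYT n mu t}, xwt n mu t

/-- The numerator defining the Demazure–Lascoux operator `ϖ_i`. -/
def DLnum (i : ℕ) (f : KPoly) : KPoly :=
  (MvPolynomial.X i + betaP * MvPolynomial.X i * MvPolynomial.X (i + 1)) * f -
    (MvPolynomial.X (i + 1) + betaP * MvPolynomial.X i * MvPolynomial.X (i + 1)) *
      (MvPolynomial.rename (Equiv.swap i (i + 1)) f)

/-- `DL` implements the Demazure–Lascoux operators `ϖ_i` for `1 ≤ i < n`: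
`(x_i - x_{i+1}) · ϖ_i f` equals the defining numerator. -/
def IsDLOp (n : ℕ) (DL : ℕ → KPoly → KPoly) : Prop :=
  ∀ i, 1 ≤ i → i < n → ∀ f : KPoly,
    (MvPolynomial.X i - MvPolynomial.X (i + 1)) * DL i f = DLnum i f

/-- `applyDL DL [i₁,…,iℓ] f = ϖ_{i₁} ϖ_{i₂} ⋯ ϖ_{iℓ} f`. -/
def applyDL (DL : ℕ → KPoly → KPoly) : List ℕ → KPoly → KPoly
  | [], f => f
  | i :: rest, f => DL i (applyDL DL rest f)

/-! ### Auxiliary lemmas for Statement 0 -/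

section Aux

variable {n : ℕ} {lam : ℕ → ℕ} {t : Filling} {i : ℕ}

lemma lam_anti (hlam : IsPartitionShape n lam) : ∀ {r s : ℕ}, r ≤ s → lam s ≤ lam r := by
  intro r s h
  induction s, h using Nat.le_induction with
  | base => exact le_rfl
  | succ s hs ih => exact le_trans (hlam.1 s) ih

lemma mem_shape (ht : IsSVT n lam t) {r c a : ℕ} (h : a ∈ t r c) : c < lam r := by
  by_contra hc
  rw [ht.emptyOutside r c hc] at h
  exact absurd h (Finset.notMem_empty a)

lemma row_lt (hlam : IsPartitionShape n lam) (ht : IsSVT n lam t) {r c a : ℕ}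
    (h : a ∈ t r c) : r < n := by
  by_contra hr
  have h1 := mem_shape ht h
  rw [hlam.2 r (le_of_not_gt hr)] at h1
  omega

lemma chain (hlam : IsPartitionShape n lam) (ht : IsSVT n lam t) {c r1 r2 a b : ℕ}
    (h : r1 < r2) (ha : a ∈ t r1 c) (hb : b ∈ t r2 c) : a < b := by
  induction r2, h using Nat.le_induction generalizing b with
  | base => exact ht.colStrict r1 c a b ha hb
  | succ r2 hr2 ih =>
    have hc : c < lam r2 := lt_of_lt_of_le (mem_shape ht hb) (hlam.1 r2)
    obtain ⟨m, hm⟩ := ht.boxNonempty r2 c hc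
    exact lt_trans (ih hm) (ht.colStrict r2 c m b hm hb)

lemma updateBox_self (t : Filling) (r c : ℕ) (S : Finset ℕ) :
    updateBox t r c S r c = S := if_pos ⟨rfl, rfl⟩

lemma updateBox_of_ne {r c r' c' : ℕ} (t : Filling) (S : Finset ℕ)
    (h : ¬(r' = r ∧ c' = c)) : updateBox t r c S r' c' = t r' c' := if_neg h

lemma isSVT_updateBox (ht : IsSVT n lam t) {r c : ℕ} {S : Finset ℕ}
    (hrc : c < lam r) (hS : S.Nonempty) (hbd : ∀ a ∈ S, 1 ≤ a ∧ a ≤ n)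
    (hleft : ∀ c0, c0 + 1 = c → ∀ a ∈ t r c0, ∀ b ∈ S, a ≤ b)
    (hright : ∀ a ∈ S, ∀ b ∈ t r (c + 1), a ≤ b)
    (hup : ∀ r0, r0 + 1 = r → ∀ a ∈ t r0 c, ∀ b ∈ S, a < b)
    (hdown : ∀ a ∈ S, ∀ b ∈ t (r + 1) c, a < b) :
    IsSVT n lam (updateBox t r c S) := by
  constructor
  · intro r' c' h
    by_cases hh : r' = r ∧ c' = c
    · obtain ⟨rfl, rfl⟩ := hh
      rw [updateBox_self]; exact hS
    · rw [updateBox_of_ne t S hh]; exact ht.boxNonempty r' c' h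
  · intro r' c' h
    by_cases hh : r' = r ∧ c' = c
    · obtain ⟨rfl, rfl⟩ := hh
      exact absurd hrc h
    · rw [updateBox_of_ne t S hh]; exact ht.emptyOutside r' c' h
  · intro r' c' a ha
    by_cases hh : r' = r ∧ c' = c
    · obtain ⟨rfl, rfl⟩ := hh
      rw [updateBox_self] at ha; exact hbd a ha
    · rw [updateBox_of_ne t S hh] at ha; exact ht.entryBounds r' c' a ha
  · intro r' c' a b ha hb
    by_cases h1 : r' = r ∧ c' = c
    · obtain ⟨rfl, rfl⟩ := h1
      rw [updateBox_self] at ha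
      rw [updateBox_of_ne t S (by omega)] at hb
      exact hright a ha b hb
    · rw [updateBox_of_ne t S h1] at ha
      by_cases h2 : r' = r ∧ c' + 1 = c
      · obtain ⟨rfl, hc'⟩ := h2
        rw [hc', updateBox_self] at hb
        exact hleft c' hc' a ha b hb
      · rw [updateBox_of_ne t S h2] at hb
        exact ht.rowWeak r' c' a b ha hb
  · intro r' c' a b ha hb
    by_cases h1 : r' = r ∧ c' = c
    · obtain ⟨rfl, rfl⟩ := h1
      rw [updateBox_self] at ha
      rw [updateBox_of_ne t S (by omega)] at hb
      exact hdown a ha b hb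
    · rw [updateBox_of_ne t S h1] at ha
      by_cases h2 : r' + 1 = r ∧ c' = c
      · obtain ⟨hr', rfl⟩ := h2
        rw [hr', updateBox_self] at hb
        exact hup r' hr' a ha b hb
      · rw [updateBox_of_ne t S h2] at hb
        exact ht.colStrict r' c' a b ha hb

lemma colSign_true {c : ℕ} (h : colSign n t i c = some true) :
    colHas n t i c ∧ ¬ colHas n t (i + 1) c := by
  unfold colSign at h
  split_ifs at h with h1 h2 <;> first | exact h1 | simp at h

lemma colSign_false {c : ℕ} (h : colSign n t i c = some false) :
    colHas n t (i + 1) c ∧ ¬ colHas n t i c := by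
  unfold colSign at h
  split_ifs at h with h1 h2 <;> first | exact h2 | simp at h

lemma plus_spread {c : ℕ} (hs : colSign n t i c = some true)
    (hm : mctr (colWordBefore n t i c) = 0) :
    mctr (colWordBefore n t i (c + 1)) = 0 := by
  unfold colWordBefore mctr at *
  rw [List.range_succ, List.filterMap_append, List.foldl_append]
  simp [hs]
  omega

lemma drop_range {c ncols : ℕ} (hc : c < ncols) :
    (List.range ncols).drop c = c :: (List.range ncols).drop (c + 1) := by
  rw [List.drop_eq_getElem_cons (by simpa using hc)]
  simp

lemma minus_spread {c ncols : ℕ} (hc0 : 0 < c) (hc : c < ncols)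
    (hs : colSign n t i c = some false)
    (hp : pctr (colWordAfter n ncols t i c) = 0) :
    pctr (colWordAfter n ncols t i (c - 1)) = 0 := by
  unfold colWordAfter pctr at *
  rw [show c - 1 + 1 = c by omega, drop_range hc]
  simp [hs]
  omega

lemma fRaw_eq_of (h : ∃ c, fBoxCol n (lam 0) t i c)
    (hr : ∃ r, r < n ∧ i ∈ t r (Classical.choose h)) :
    fRaw n lam i t =
      if i ∈ t (Classical.choose hr) (Classical.choose h + 1) then
        some (updateBox (updateBox t (Classical.choose hr) (Classical.choose h + 1)
          ((t (Classical.choose hr) (Classical.choose h + 1)).erase i)) (Classical.choose hr)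
          (Classical.choose h) (insert (i + 1) (t (Classical.choose hr) (Classical.choose h))))
      else some (updateBox t (Classical.choose hr) (Classical.choose h)
        (insert (i + 1) ((t (Classical.choose hr) (Classical.choose h)).erase i))) := by
  simp only [fRaw]
  rw [dif_pos h, dif_pos hr]

lemma eRaw_eq_of (h : ∃ c, eBoxCol n (lam 0) t i c)
    (hr : ∃ r, r < n ∧ (i + 1) ∈ t r (Classical.choose h)) :
    eRaw n lam i t =
      if 0 < Classical.choose h ∧ (i + 1) ∈ t (Classical.choose hr) (Classical.choose h - 1) then
        some (updateBox (updateBox t (Classical.choose hr) (Classical.choose h - 1)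
          ((t (Classical.choose hr) (Classical.choose h - 1)).erase (i + 1))) (Classical.choose hr)
          (Classical.choose h) (insert i (t (Classical.choose hr) (Classical.choose h))))
      else some (updateBox t (Classical.choose hr) (Classical.choose h)
        (insert i ((t (Classical.choose hr) (Classical.choose h)).erase (i + 1)))) := by
  simp only [eRaw]
  rw [dif_pos h, dif_pos hr]

lemma f_key (hlam : IsPartitionShape n lam) (ht : IsSVT n lam t) {r c : ℕ}
    (hir : i ∈ t r c) (hno : ¬ colHas n t (i + 1) c)
    (hmem : i ∈ t r (c + 1)) (h1 : colHas n t (i + 1) (c + 1)) : i + 1 ∈ t r (c + 1) := by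
  obtain ⟨r', hr'n, hr'⟩ := h1
  rcases lt_trichotomy r' r with hlt | rfl | hgt
  · exact absurd (chain hlam ht hlt hr' hmem) (by omega)
  · exact hr'
  · exfalso
    have hr1 : r' = r + 1 := by
      by_contra hne
      have hstep : r + 1 < r' := by omega
      have hcl : c + 1 < lam (r + 1) :=
        lt_of_lt_of_le (mem_shape ht hr') (lam_anti hlam (by omega))
      obtain ⟨m, hm⟩ := ht.boxNonempty (r + 1) (c + 1) hcl
      have h2 := ht.colStrict r (c + 1) i m hmem hm
      have h3 := chain hlam ht hstep hm hr'
      omega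
    subst hr1
    have hcl : c < lam (r + 1) := by
      have h2 := mem_shape ht hr'; omega
    obtain ⟨b, hb⟩ := ht.boxNonempty (r + 1) c hcl
    have h2 := ht.colStrict r c i b hir hb
    have h3 := ht.rowWeak (r + 1) c b (i + 1) hb hr'
    have hb1 : b = i + 1 := by omega
    exact hno ⟨r + 1, hr'n, hb1 ▸ hb⟩

lemma e_key (hlam : IsPartitionShape n lam) (ht : IsSVT n lam t) {r c : ℕ}
    (hrn : r < n) (hir : i + 1 ∈ t r c) (hno : ¬ colHas n t i c) (hc0 : 0 < c)
    (hml : i + 1 ∈ t r (c - 1)) (h1 : colHas n t i (c - 1)) : i ∈ t r (c - 1) := by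
  obtain ⟨cp, rfl⟩ : ∃ cp, c = cp + 1 := ⟨c - 1, by omega⟩
  simp only [Nat.add_sub_cancel] at *
  obtain ⟨r'', hr''n, hr''⟩ := h1
  rcases lt_trichotomy r r'' with hlt | rfl | hgt
  · exact absurd (chain hlam ht hlt hml hr'') (by omega)
  · exact hr''
  · exfalso
    obtain ⟨rp, rfl⟩ : ∃ rp, r = rp + 1 := ⟨r - 1, by omega⟩
    have hr1 : r'' = rp := by
      by_contra hne
      have hstep : r'' < rp := by omega
      have hcl : cp < lam rp := lt_of_lt_of_le (mem_shape ht hml) (hlam.1 rp)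
      obtain ⟨m, hm⟩ := ht.boxNonempty rp cp hcl
      have h2 := chain hlam ht hstep hr'' hm
      have h3 := ht.colStrict rp cp m (i + 1) hm hml
      omega
    subst hr1
    have hcl : cp + 1 < lam r'' := lt_of_lt_of_le (mem_shape ht hir) (hlam.1 r'')
    obtain ⟨b, hb⟩ := ht.boxNonempty r'' (cp + 1) hcl
    have h2 := ht.rowWeak r'' cp i b hr'' hb
    have h3 := ht.colStrict r'' (cp + 1) b (i + 1) hb hir
    have hb1 : b = i := by omega
    exact hno ⟨r'', by omega, hb1 ▸ hb⟩

lemma f_case2_SVT (hlam : IsPartitionShape n lam) (ht : IsSVT n lam t)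
    (hin : i < n) {r c : ℕ} (hir : i ∈ t r c)
    (hno : ∀ r', i + 1 ∉ t r' c) (hmem : i ∉ t r (c + 1)) :
    IsSVT n lam (updateBox t r c (insert (i + 1) ((t r c).erase i))) := by
  apply isSVT_updateBox ht (mem_shape ht hir) (Finset.insert_nonempty _ _)
  · intro a ha
    rcases Finset.mem_insert.1 ha with rfl | ha
    · exact ⟨by omega, by omega⟩
    · exact ht.entryBounds r c a (Finset.mem_of_mem_erase ha)
  · intro c0 hc0 a ha b hb
    rcases Finset.mem_insert.1 hb with rfl | hb
    · have h2 := ht.rowWeak r c0 a i ha (by rw [hc0]; exact hir); omega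
    · exact ht.rowWeak r c0 a b ha (by rw [hc0]; exact Finset.mem_of_mem_erase hb)
  · intro a ha b hb
    rcases Finset.mem_insert.1 ha with rfl | ha
    · have h1 := ht.rowWeak r c i b hir hb
      have h2 : b ≠ i := fun e => hmem (e ▸ hb)
      omega
    · exact ht.rowWeak r c a b (Finset.mem_of_mem_erase ha) hb
  · intro r0 hr0 a ha b hb
    rcases Finset.mem_insert.1 hb with rfl | hb
    · have h2 := ht.colStrict r0 c a i ha (by rw [hr0]; exact hir); omega
    · exact ht.colStrict r0 c a b ha (by rw [hr0]; exact Finset.mem_of_mem_erase hb)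
  · intro a ha b hb
    rcases Finset.mem_insert.1 ha with rfl | ha
    · have h1 := ht.colStrict r c i b hir hb
      have h2 : b ≠ i + 1 := fun e => hno (r + 1) (e ▸ hb)
      omega
    · exact ht.colStrict r c a b (Finset.mem_of_mem_erase ha) hb

lemma f_case1_SVT (hlam : IsPartitionShape n lam) (ht : IsSVT n lam t)
    (hin : i < n) {r c : ℕ} (hir : i ∈ t r c)
    (hno : ∀ r', i + 1 ∉ t r' c) (hmem : i ∈ t r (c + 1)) (hkey : i + 1 ∈ t r (c + 1)) :
    IsSVT n lam (updateBox (updateBox t r (c + 1) ((t r (c + 1)).erase i)) r c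
      (insert (i + 1) (t r c))) := by
  have hBne : ((t r (c + 1)).erase i).Nonempty :=
    ⟨i + 1, Finset.mem_erase.2 ⟨by omega, hkey⟩⟩
  have ht1 : IsSVT n lam (updateBox t r (c + 1) ((t r (c + 1)).erase i)) := by
    apply isSVT_updateBox ht (mem_shape ht hmem) hBne
    · exact fun a ha => ht.entryBounds r (c + 1) a (Finset.mem_of_mem_erase ha)
    · intro c0 hc0 a ha b hb
      exact ht.rowWeak r c0 a b ha (by rw [hc0]; exact Finset.mem_of_mem_erase hb)
    · exact fun a ha b hb => ht.rowWeak r (c + 1) a b (Finset.mem_of_mem_erase ha) hb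
    · intro r0 hr0 a ha b hb
      exact ht.colStrict r0 (c + 1) a b ha (by rw [hr0]; exact Finset.mem_of_mem_erase hb)
    · exact fun a ha b hb => ht.colStrict r (c + 1) a b (Finset.mem_of_mem_erase ha) hb
  apply isSVT_updateBox ht1 (mem_shape ht hir) (Finset.insert_nonempty _ _)
  · intro a ha
    rcases Finset.mem_insert.1 ha with rfl | ha
    · exact ⟨by omega, by omega⟩
    · exact ht.entryBounds r c a ha
  · intro c0 hc0 a ha b hb
    rw [updateBox_of_ne _ _ (show ¬(r = r ∧ c0 = c + 1) by omega)] at ha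
    rcases Finset.mem_insert.1 hb with rfl | hb
    · have h2 := ht.rowWeak r c0 a i ha (by rw [hc0]; exact hir); omega
    · exact ht.rowWeak r c0 a b ha (by rw [hc0]; exact hb)
  · intro a ha b hb
    rw [updateBox_self] at hb
    have hb' := Finset.mem_of_mem_erase hb
    have hbne : b ≠ i := (Finset.mem_erase.1 hb).1
    rcases Finset.mem_insert.1 ha with rfl | ha
    · have h1 := ht.rowWeak r c i b hir hb'; omega
    · exact ht.rowWeak r c a b ha hb'
  · intro r0 hr0 a ha b hb
    rw [updateBox_of_ne _ _ (show ¬(r0 = r ∧ c = c + 1) by omega)] at ha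
    rcases Finset.mem_insert.1 hb with rfl | hb
    · have h2 := ht.colStrict r0 c a i ha (by rw [hr0]; exact hir); omega
    · exact ht.colStrict r0 c a b ha (by rw [hr0]; exact hb)
  · intro a ha b hb
    rw [updateBox_of_ne _ _ (show ¬(r + 1 = r ∧ c = c + 1) by omega)] at hb
    rcases Finset.mem_insert.1 ha with rfl | ha
    · have h1 := ht.colStrict r c i b hir hb
      have h2 : b ≠ i + 1 := fun e => hno (r + 1) (e ▸ hb)
      omega
    · exact ht.colStrict r c a b ha hb

lemma e_caseB_SVT (hlam : IsPartitionShape n lam) (ht : IsSVT n lam t)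
    (hi1 : 1 ≤ i) (hin : i < n) {r c : ℕ} (hir : i + 1 ∈ t r c)
    (hno : ∀ r', i ∉ t r' c) (hnl : ∀ c0, c0 + 1 = c → i + 1 ∉ t r c0) :
    IsSVT n lam (updateBox t r c (insert i ((t r c).erase (i + 1)))) := by
  apply isSVT_updateBox ht (mem_shape ht hir) (Finset.insert_nonempty _ _)
  · intro a ha
    rcases Finset.mem_insert.1 ha with he | ha
    · exact ⟨by omega, by omega⟩
    · exact ht.entryBounds r c a (Finset.mem_of_mem_erase ha)
  · intro c0 hc0 a ha b hb
    rcases Finset.mem_insert.1 hb with he | hb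
    · have h1 := ht.rowWeak r c0 a (i + 1) ha (by rw [hc0]; exact hir)
      have h2 : a ≠ i + 1 := fun e => hnl c0 hc0 (e ▸ ha)
      omega
    · exact ht.rowWeak r c0 a b ha (by rw [hc0]; exact Finset.mem_of_mem_erase hb)
  · intro a ha b hb
    rcases Finset.mem_insert.1 ha with he | ha
    · have h1 := ht.rowWeak r c (i + 1) b hir hb; omega
    · exact ht.rowWeak r c a b (Finset.mem_of_mem_erase ha) hb
  · intro r0 hr0 a ha b hb
    rcases Finset.mem_insert.1 hb with he | hb
    · have h1 := ht.colStrict r0 c a (i + 1) ha (by rw [hr0]; exact hir)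
      have h2 : a ≠ i := fun e => hno r0 (e ▸ ha)
      omega
    · exact ht.colStrict r0 c a b ha (by rw [hr0]; exact Finset.mem_of_mem_erase hb)
  · intro a ha b hb
    rcases Finset.mem_insert.1 ha with he | ha
    · have h1 := ht.colStrict r c (i + 1) b hir hb; omega
    · exact ht.colStrict r c a b (Finset.mem_of_mem_erase ha) hb

lemma e_caseA_SVT (hlam : IsPartitionShape n lam) (ht : IsSVT n lam t)
    (hi1 : 1 ≤ i) (hin : i < n) {r c : ℕ} (hir : i + 1 ∈ t r c) (hc0 : 0 < c)
    (hno : ∀ r', i ∉ t r' c) (hml : i + 1 ∈ t r (c - 1)) (hkey : i ∈ t r (c - 1)) :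
    IsSVT n lam (updateBox (updateBox t r (c - 1) ((t r (c - 1)).erase (i + 1))) r c
      (insert i (t r c))) := by
  obtain ⟨cp, rfl⟩ : ∃ cp, c = cp + 1 := ⟨c - 1, by omega⟩
  simp only [Nat.add_sub_cancel] at *
  have hBne : ((t r cp).erase (i + 1)).Nonempty :=
    ⟨i, Finset.mem_erase.2 ⟨by omega, hkey⟩⟩
  have ht1 : IsSVT n lam (updateBox t r cp ((t r cp).erase (i + 1))) := by
    apply isSVT_updateBox ht (mem_shape ht hml) hBne
    · exact fun a ha => ht.entryBounds r cp a (Finset.mem_of_mem_erase ha)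
    · intro c0 hc0' a ha b hb
      exact ht.rowWeak r c0 a b ha (by rw [hc0']; exact Finset.mem_of_mem_erase hb)
    · exact fun a ha b hb => ht.rowWeak r cp a b (Finset.mem_of_mem_erase ha) hb
    · intro r0 hr0 a ha b hb
      exact ht.colStrict r0 cp a b ha (by rw [hr0]; exact Finset.mem_of_mem_erase hb)
    · exact fun a ha b hb => ht.colStrict r cp a b (Finset.mem_of_mem_erase ha) hb
  apply isSVT_updateBox ht1 (mem_shape ht hir) (Finset.insert_nonempty _ _)
  · intro a ha
    rcases Finset.mem_insert.1 ha with he | ha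
    · exact ⟨by omega, by omega⟩
    · exact ht.entryBounds r (cp + 1) a ha
  · intro c0 hc0' a ha b hb
    rw [show c0 = cp by omega, updateBox_self] at ha
    have ha' := Finset.mem_of_mem_erase ha
    have hane : a ≠ i + 1 := (Finset.mem_erase.1 ha).1
    rcases Finset.mem_insert.1 hb with he | hb
    · have h1 := ht.rowWeak r cp a (i + 1) ha' hir; omega
    · exact ht.rowWeak r cp a b ha' hb
  · intro a ha b hb
    rw [updateBox_of_ne _ _ (show ¬(r = r ∧ cp + 1 + 1 = cp) by omega)] at hb
    rcases Finset.mem_insert.1 ha with he | ha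
    · have h1 := ht.rowWeak r (cp + 1) (i + 1) b hir hb; omega
    · exact ht.rowWeak r (cp + 1) a b ha hb
  · intro r0 hr0 a ha b hb
    rw [updateBox_of_ne _ _ (show ¬(r0 = r ∧ cp + 1 = cp) by omega)] at ha
    rcases Finset.mem_insert.1 hb with he | hb
    · have h1 := ht.colStrict r0 (cp + 1) a (i + 1) ha (by rw [hr0]; exact hir)
      have h2 : a ≠ i := fun e => hno r0 (e ▸ ha)
      omega
    · exact ht.colStrict r0 (cp + 1) a b ha (by rw [hr0]; exact hb)
  · intro a ha b hb
    rw [updateBox_of_ne _ _ (show ¬(r + 1 = r ∧ cp + 1 = cp) by omega)] at hb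
    rcases Finset.mem_insert.1 ha with he | ha
    · have h1 := ht.colStrict r (cp + 1) (i + 1) b hir hb; omega
    · exact ht.colStrict r (cp + 1) a b ha hb

end Aux

/-- For every semistandard set-valued tableau `T ∈ SVT^n(λ)` and
`1 ≤ i < n`, the results of the crystal operators `f_i` and `e_i` are either `0` or again
valid semistandard set-valued tableaux of shape `λ`. -/
theorem crystal_operators_well_defined (n : ℕ) (lam : ℕ → ℕ)
    (hlam : IsPartitionShape n lam) (i : ℕ) (hi1 : 1 ≤ i) (hin : i < n)
    (t : Filling) (ht : IsSVT n lam t) :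
    (fRaw n lam i t = none ∨ ∃ t', fRaw n lam i t = some t' ∧ IsSVT n lam t') ∧
    (eRaw n lam i t = none ∨ ∃ t', eRaw n lam i t = some t' ∧ IsSVT n lam t') := by
  constructor
  · -- f_i
    by_cases h : ∃ c, fBoxCol n (lam 0) t i c
    · right
      obtain ⟨⟨hclt, hsign, hmz⟩, hmax⟩ := Classical.choose_spec h
      obtain ⟨hhasi, hnoi1⟩ := colSign_true hsign
      obtain ⟨r0, hr0n, hr0⟩ := hhasi
      have hr : ∃ r, r < n ∧ i ∈ t r (Classical.choose h) := ⟨r0, hr0n, hr0⟩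
      obtain ⟨hrn, hir⟩ := Classical.choose_spec hr
      set c := Classical.choose h with hcdef
      set r := Classical.choose hr with hrdef
      have hno : ∀ r', i + 1 ∉ t r' c := fun r' hm => hnoi1 ⟨r', row_lt hlam ht hm, hm⟩
      by_cases hmem : i ∈ t r (c + 1)
      · have h1 : colHas n t (i + 1) (c + 1) := by
          by_contra hcon
          have hs1 : colSign n t i (c + 1) = some true := by
            unfold colSign
            rw [if_pos ⟨⟨r, hrn, hmem⟩, hcon⟩]
          have hp1 : PlusCol n (lam 0) t i (c + 1) :=
            ⟨lt_of_lt_of_le (mem_shape ht hmem) (lam_anti hlam (Nat.zero_le r)), hs1,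
              plus_spread hsign hmz⟩
          have h2 := hmax (c + 1) hp1
          omega
        refine ⟨_, ?_, f_case1_SVT hlam ht hin hir hno hmem
          (f_key hlam ht hir hnoi1 hmem h1)⟩
        rw [fRaw_eq_of h hr, if_pos hmem]
      · refine ⟨_, ?_, f_case2_SVT hlam ht hin hir hno hmem⟩
        rw [fRaw_eq_of h hr, if_neg hmem]
    · left
      simp only [fRaw]
      rw [dif_neg h]
  · -- e_i
    by_cases h : ∃ c, eBoxCol n (lam 0) t i c
    · right
      obtain ⟨⟨hclt, hsign, hpz⟩, hmin⟩ := Classical.choose_spec h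
      obtain ⟨hhasi1, hnoi⟩ := colSign_false hsign
      obtain ⟨r0, hr0n, hr0⟩ := hhasi1
      have hr : ∃ r, r < n ∧ (i + 1) ∈ t r (Classical.choose h) := ⟨r0, hr0n, hr0⟩
      obtain ⟨hrn, hir⟩ := Classical.choose_spec hr
      set c := Classical.choose h with hcdef
      set r := Classical.choose hr with hrdef
      have hno : ∀ r', i ∉ t r' c := fun r' hm => hnoi ⟨r', row_lt hlam ht hm, hm⟩
      by_cases hmem : 0 < c ∧ (i + 1) ∈ t r (c - 1)
      · have h1 : colHas n t i (c - 1) := by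
          by_contra hcon
          have hs1 : colSign n t i (c - 1) = some false := by
            unfold colSign
            rw [if_neg (fun hx => hcon hx.1), if_pos ⟨⟨r, hrn, hmem.2⟩, hcon⟩]
          have hm1 : MinusCol n (lam 0) t i (c - 1) :=
            ⟨by omega, hs1, minus_spread hmem.1 hclt hsign hpz⟩
          have h2 := hmin (c - 1) hm1
          omega
        refine ⟨_, ?_, e_caseA_SVT hlam ht hi1 hin hir hmem.1 hno hmem.2
          (e_key hlam ht hrn hir hnoi hmem.1 hmem.2 h1)⟩
        rw [eRaw_eq_of h hr, if_pos hmem]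
      · have hnl : ∀ c0, c0 + 1 = c → i + 1 ∉ t r c0 := by
          intro c0 hc0 hmm
          exact hmem ⟨by omega, by rw [show c - 1 = c0 by omega]; exact hmm⟩
        refine ⟨_, ?_, e_caseB_SVT hlam ht hi1 hin hir hno hnl⟩
        rw [eRaw_eq_of h hr, if_neg hmem]
    · left
      simp only [eRaw]
      rw [dif_neg h]

end SVTCrystal

end
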